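/- arXiv:2403.04262 — 3 statements merged into one kernel-verified Lean document; each statement's English description precedes it below -/
import Mathlib

section
/- Consider the structured problem of minimizing φ = f + g, where f : ℝⁿ → ℝ is differentiable with ∇f Lipschitz continuous on ℝⁿ with modulus L_f > 0, and g : ℝⁿ → ℝ ∪ {+∞} is proper, lower semicontinuous, and prox-bounded with threshold λ_g. If x̄ is a global minimizer of φ, then for every λ ∈ (0, min{1/L_f, λ_g}) the set Prox_{λg}(x̄ − λ∇f(x̄)) is the singleton {x̄}; in particular, x̄ is a λ-critical point of the problem. -/
open Filter Topology

notation "⟪" x ", " y "⟫" => @inner ℝ _ _ x y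

noncomputable section

abbrev En (n : ℕ) : Type := EuclideanSpace ℝ (Fin n)

namespace Paper

variable {n : ℕ}

/-- A function `φ : ℝⁿ → ℝ ∪ {+∞}` (encoded into `EReal`) is proper if it is
nowhere `-∞` and somewhere finite. -/
def Proper (φ : En n → EReal) : Prop := (∃ x, φ x ≠ ⊤) ∧ ∀ x, φ x ≠ ⊥

/-- Fréchet (regular) subdifferential. -/
def RegSubdiff (φ : En n → EReal) (x : En n) : Set (En n) :=
  {v | φ x ≠ ⊤ ∧ ∀ ε : ℝ, 0 < ε → ∃ δ : ℝ, 0 < δ ∧ ∀ y : En n, ‖y - x‖ < δ →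
      φ x + ((⟪v, y - x⟫ - ε * ‖y - x‖ : ℝ) : EReal) ≤ φ y}

/-- Limiting (Mordukhovich) subdifferential. -/
def LimSubdiff (φ : En n → EReal) (x : En n) : Set (En n) :=
  {v | ∃ xs : ℕ → En n, ∃ vs : ℕ → En n,
      Tendsto xs atTop (𝓝 x) ∧
      Tendsto (fun k => φ (xs k)) atTop (𝓝 (φ x)) ∧
      Tendsto vs atTop (𝓝 v) ∧ ∀ k, vs k ∈ RegSubdiff φ (xs k)}

/-- Graph of the limiting subdifferential. -/
def gphSubdiff (φ : En n → EReal) : Set (En n × En n) :=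
  {p | p.2 ∈ LimSubdiff φ p.1}

/-- Regular (Fréchet) normal cone to a subset of the product `ℝⁿ × ℝⁿ`. -/
def RegNormalConeP (Ω : Set (En n × En n)) (z : En n × En n) : Set (En n × En n) :=
  {v | ∀ ε : ℝ, 0 < ε → ∃ δ : ℝ, 0 < δ ∧ ∀ w ∈ Ω, ‖w - z‖ < δ →
      ⟪v.1, w.1 - z.1⟫ + ⟪v.2, w.2 - z.2⟫ ≤ ε * ‖w - z‖}

/-- Limiting normal cone to a subset of the product `ℝⁿ × ℝⁿ`. -/
def LimNormalConeP (Ω : Set (En n × En n)) (z : En n × En n) : Set (En n × En n) :=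
  {v | ∃ zs : ℕ → En n × En n, ∃ vs : ℕ → En n × En n,
      (∀ k, zs k ∈ Ω) ∧ Tendsto zs atTop (𝓝 z) ∧ Tendsto vs atTop (𝓝 v) ∧
      ∀ k, vs k ∈ RegNormalConeP Ω (zs k)}

/-- Directional limiting normal cone. -/
def DirLimNormalConeP (Ω : Set (En n × En n)) (z d : En n × En n) :
    Set (En n × En n) :=
  {v | ∃ t : ℕ → ℝ, ∃ ds : ℕ → En n × En n, ∃ vs : ℕ → En n × En n,
      (∀ k, 0 < t k) ∧ Tendsto t atTop (𝓝 0) ∧ Tendsto ds atTop (𝓝 d) ∧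
      Tendsto vs atTop (𝓝 v) ∧ ∀ k, vs k ∈ RegNormalConeP Ω (z + t k • ds k)}

/-- Semismoothness* of a set-valued map (given by its graph) at a point of the graph. -/
def SemismoothStar (Ω : Set (En n × En n)) (z : En n × En n) : Prop :=
  ∀ u v ustar vstar : En n,
    (ustar, -vstar) ∈ DirLimNormalConeP Ω z (u, v) → ⟪ustar, u⟫ = ⟪vstar, v⟫

/-- Second-order subdifferential (generalized Hessian) of `φ` at `x` for `v`. -/
def SecondSubdiff (φ : En n → EReal) (x v u : En n) : Set (En n) :=
  {w | (w, -u) ∈ LimNormalConeP (gphSubdiff φ) (x, v)}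

/-- Graph of the gradient mapping of a real-valued function. -/
def gphGrad (h : En n → ℝ) : Set (En n × En n) := {p | p.2 = gradient h p.1}

/-- Second-order subdifferential of a `C¹` real-valued function via its gradient graph. -/
def SecondSubdiffFun (h : En n → ℝ) (x v u : En n) : Set (En n) :=
  {w | (w, -u) ∈ LimNormalConeP (gphGrad h) (x, v)}

/-- Metric regularity of a set-valued map around a point of its graph. -/
def MetrReg (F : En n → Set (En n)) (x y : En n) : Prop :=
  ∃ μ : ℝ, 0 < μ ∧ ∃ U ∈ 𝓝 x, ∃ V ∈ 𝓝 y, ∀ a ∈ U, ∀ b ∈ V,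
    EMetric.infEdist a {z | b ∈ F z} ≤ ENNReal.ofReal μ * EMetric.infEdist b (F a)

/-- Moreau envelope. -/
def moreau (φ : En n → EReal) (lam : ℝ) (x : En n) : EReal :=
  ⨅ y : En n, φ y + ((‖y - x‖ ^ 2 / (2 * lam) : ℝ) : EReal)

/-- Proximal mapping (as the set of minimizers). -/
def proxSet (φ : En n → EReal) (lam : ℝ) (x : En n) : Set (En n) :=
  {y | ∀ z : En n, φ y + ((‖y - x‖ ^ 2 / (2 * lam) : ℝ) : EReal)
        ≤ φ z + ((‖z - x‖ ^ 2 / (2 * lam) : ℝ) : EReal)}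

/-- Prox-boundedness. -/
def ProxBounded (φ : En n → EReal) : Prop :=
  ∃ lam : ℝ, 0 < lam ∧ ∃ x, moreau φ lam x ≠ ⊥

/-- Threshold of prox-boundedness. -/
def proxThreshold (φ : En n → EReal) : EReal :=
  sSup {l : EReal | ∃ lam : ℝ, l = (lam : EReal) ∧ 0 < lam ∧ ∃ x, moreau φ lam x ≠ ⊥}

/-- `r`-level prox-regularity at `xb` for `vb ∈ ∂φ(xb)`. -/
def ProxRegular (φ : En n → EReal) (r : ℝ) (xb vb : En n) : Prop :=
  vb ∈ LimSubdiff φ xb ∧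
  ∃ ε : ℝ, 0 < ε ∧ ∃ U ∈ 𝓝 xb, ∃ V ∈ 𝓝 vb,
    ∀ x ∈ U, ∀ u ∈ U, ∀ v ∈ V, v ∈ LimSubdiff φ u → φ u < φ xb + (ε : EReal) →
      φ u + ((⟪v, x - u⟫ - r / 2 * ‖x - u‖ ^ 2 : ℝ) : EReal) ≤ φ x

/-- Subdifferential continuity at `xb` for `vb ∈ ∂φ(xb)`. -/
def SubdiffCont (φ : En n → EReal) (xb vb : En n) : Prop :=
  vb ∈ LimSubdiff φ xb ∧
  ∀ ε : ℝ, 0 < ε → ∃ δ : ℝ, 0 < δ ∧ ∀ x v : En n, v ∈ LimSubdiff φ x →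
    ‖x - xb‖ < δ → ‖v - vb‖ < δ →
      φ xb - (ε : EReal) < φ x ∧ φ x < φ xb + (ε : EReal)

/-- Continuous `r`-level prox-regularity. -/
def ContProxRegular (φ : En n → EReal) (r : ℝ) (xb vb : En n) : Prop :=
  ProxRegular φ r xb vb ∧ SubdiffCont φ xb vb

/-- Continuous prox-regularity (for some level `r ≥ 0`). -/
def ContinuouslyProxRegular (φ : En n → EReal) (xb vb : En n) : Prop :=
  (∃ r : ℝ, 0 ≤ r ∧ ProxRegular φ r xb vb) ∧ SubdiffCont φ xb vb

/-- The structured sum `φ = f + g`. -/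
def phiSum (f : En n → ℝ) (g : En n → EReal) : En n → EReal :=
  fun x => (f x : EReal) + g x

/-- Hessian of a `C²` function as a continuous linear map. -/
def hess (f : En n → ℝ) (x : En n) : En n →L[ℝ] En n := fderiv ℝ (gradient f) x

/-- Normal map associated with the structured problem. -/
def normalMap (f : En n → ℝ) (g : En n → EReal) (lam : ℝ) (x : En n) : Set (En n) :=
  {w | ∃ xh ∈ proxSet g lam x, w = gradient f xh + (1 / lam) • (x - xh)}

/-- `λ`-critical points of the structured problem. -/
def lamCritical (f : En n → ℝ) (g : En n → EReal) (lam : ℝ) (x : En n) : Prop :=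
  x ∈ proxSet g lam (x - lam • gradient f x)

/-- Forward-backward envelope. -/
def FBE (f : En n → ℝ) (g : En n → EReal) (lam : ℝ) (x : En n) : EReal :=
  ⨅ y : En n,
    ((f x + ⟪gradient f x, y - x⟫ + ‖y - x‖ ^ 2 / (2 * lam) : ℝ) : EReal) + g y

/-- Real-valued forward-backward envelope. -/
def FBEr (f : En n → ℝ) (g : En n → EReal) (lam : ℝ) (x : En n) : ℝ :=
  (FBE f g lam x).toReal

/-- Tilt-stable local minimizer. -/
def TiltStable (φ : En n → EReal) (xb : En n) : Prop :=
  ∃ γ : ℝ, 0 < γ ∧ ∃ M : En n → En n, ∃ W ∈ 𝓝 (0 : En n), ∃ K : NNReal,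
    LipschitzOnWith K M W ∧ M 0 = xb ∧
    ∀ v ∈ W, {y : En n | ‖y - xb‖ ≤ γ ∧ ∀ z : En n, ‖z - xb‖ ≤ γ →
        φ y + ((-⟪v, y⟫ : ℝ) : EReal) ≤ φ z + ((-⟪v, z⟫ : ℝ) : EReal)} = {M v}

/-- `r`-weak convexity (`r = 0` is plain convexity). -/
def WeaklyConvex (g : En n → EReal) (r : ℝ) : Prop :=
  ∀ x y : En n, ∀ t : ℝ, 0 ≤ t → t ≤ 1 →
    g (t • x + (1 - t) • y) + ((r / 2 * ‖t • x + (1 - t) • y‖ ^ 2 : ℝ) : EReal) ≤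
      (t : EReal) * (g x + ((r / 2 * ‖x‖ ^ 2 : ℝ) : EReal)) +
        ((1 - t : ℝ) : EReal) * (g y + ((r / 2 * ‖y‖ ^ 2 : ℝ) : EReal))

/-- Second subderivative. -/
def secondSubderiv (φ : En n → EReal) (x v w : En n) : EReal :=
  Filter.liminf
    (fun p : ℝ × En n =>
      ((2 / p.1 ^ 2 : ℝ) : EReal) *
        (φ (x + p.1 • p.2) - φ x - ((p.1 * ⟪v, p.2⟫ : ℝ) : EReal)))
    ((𝓝[>] (0 : ℝ)) ×ˢ 𝓝 w)

/-- Twice epi-differentiability. -/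
def TwiceEpiDiff (φ : En n → EReal) (x v : En n) : Prop :=
  ∀ w : En n, ∀ τ : ℕ → ℝ, (∀ k, 0 < τ k) → Tendsto τ atTop (𝓝 0) →
    ∃ ws : ℕ → En n, Tendsto ws atTop (𝓝 w) ∧
      Tendsto (fun k =>
        ((2 / τ k ^ 2 : ℝ) : EReal) *
          (φ (x + τ k • ws k) - φ x - ((τ k * ⟪v, ws k⟫ : ℝ) : EReal)))
        atTop (𝓝 (secondSubderiv φ x v w))

/-- Strong variational convexity (via the subgradient characterization). -/
def StronglyVarConvex (φ : En n → EReal) (xb vb : En n) : Prop :=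
  vb ∈ LimSubdiff φ xb ∧
  ∃ σ : ℝ, 0 < σ ∧ ∃ ε : ℝ, 0 < ε ∧ ∃ U ∈ 𝓝 xb, ∃ V ∈ 𝓝 vb,
    ∀ u₁ ∈ U, ∀ u₂ ∈ U, ∀ v₁ ∈ V, ∀ v₂ ∈ V,
      v₁ ∈ LimSubdiff φ u₁ → v₂ ∈ LimSubdiff φ u₂ →
      φ u₁ < φ xb + (ε : EReal) → φ u₂ < φ xb + (ε : EReal) →
      σ * ‖u₁ - u₂‖ ^ 2 ≤ ⟪v₁ - v₂, u₁ - u₂⟫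

/-- Bouligand Jacobian. -/
def BouligandJac (h : En n → En n) (x : En n) : Set (En n →L[ℝ] En n) :=
  {H | ∃ xs : ℕ → En n, Tendsto xs atTop (𝓝 x) ∧ (∀ k, DifferentiableAt ℝ h (xs k)) ∧
      Tendsto (fun k => fderiv ℝ h (xs k)) atTop (𝓝 H)}

/-- The ℓ₀-"norm": number of nonzero components. -/
def ell0 (x : En n) : ℕ := (Finset.univ.filter fun i => x i ≠ 0).card

end Paper

open Paper

/-! Completing the square, the prox objective `y ↦ g y + ‖y - (x̄ - λ∇f x̄)‖² / (2λ)` equals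
`g y + ⟪∇f x̄, y - x̄⟫ + ‖y - x̄‖² / (2λ)` up to a constant. The descent lemma bounds the inner
product below by `f y - f x̄ - (L/2)‖y - x̄‖²`, so global minimality of `x̄` for `f + g` gives the
prox objective quadratic growth `(1/(2λ) - L/2)‖y - x̄‖²` away from `x̄`, with a positive rate
exactly when `λ < 1/L`. -/

theorem setOf_forall_le_eq_singleton_of_quadratic_growth {E : Type*} [NormedAddCommGroup E]
    (ψ : E → EReal) {xb : E} {c : ℝ} (hc : 0 < c) (hbot : ψ xb ≠ ⊥) (htop : ψ xb ≠ ⊤)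
    (hgrowth : ∀ y, ψ xb + ((c * ‖y - xb‖ ^ 2 : ℝ) : EReal) ≤ ψ y) :
    {y | ∀ z, ψ y ≤ ψ z} = {xb} := by
  ext y
  refine ⟨fun hy => ?_, fun hy z => ?_⟩
  · by_contra hne
    lift ψ xb to ℝ using ⟨htop, hbot⟩ with a ha
    have hpos : 0 < c * ‖y - xb‖ ^ 2 := by
      have := sub_ne_zero.2 hne
      positivity
    have := (hgrowth y).trans (hy xb)
    rw [← ha, ← EReal.coe_add, EReal.coe_le_coe_iff] at this
    linarith
  · rw [Set.mem_singleton_iff.1 hy]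
    refine le_trans ?_ (hgrowth z)
    exact le_add_of_nonneg_right (EReal.coe_nonneg.2 (by positivity))

section InnerProductSpace

variable {E : Type*} [NormedAddCommGroup E] [InnerProductSpace ℝ E]

theorem HasGradientAt.hasDerivAt_comp_add_smul [CompleteSpace E] {f : E → ℝ} {x v f' : E} {t : ℝ}
    (hf : HasGradientAt f f' (x + t • v)) :
    HasDerivAt (fun s : ℝ => f (x + s • v)) ⟪f', v⟫ t := by
  have hline : HasDerivAt (fun s : ℝ => x + s • v) v t := by
    simpa using ((hasDerivAt_id t).smul_const v).const_add x
  have h := hf.hasFDerivAt.comp_hasDerivAt t hline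
  simp only [InnerProductSpace.toDual_apply_apply] at h
  exact h

theorem LipschitzWith.inner_gradient_add_smul_sub_le [CompleteSpace E] {f : E → ℝ} {L : NNReal}
    (hlip : LipschitzWith L (gradient f)) (x v : E) {t : ℝ} (ht : 0 ≤ t) :
    ⟪gradient f (x + t • v) - gradient f x, v⟫ ≤ L * t * ‖v‖ ^ 2 :=
  calc ⟪gradient f (x + t • v) - gradient f x, v⟫
      ≤ ‖gradient f (x + t • v) - gradient f x‖ * ‖v‖ := real_inner_le_norm _ _
    _ ≤ L * ‖(x + t • v) - x‖ * ‖v‖ := by gcongr; exact hlip.norm_sub_le _ _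
    _ = L * t * ‖v‖ ^ 2 := by
        rw [add_sub_cancel_left, norm_smul, Real.norm_of_nonneg ht]; ring

theorem descent_lemma [CompleteSpace E] {f : E → ℝ} {L : NNReal} (hf : Differentiable ℝ f)
    (hlip : LipschitzWith L (gradient f)) (x y : E) :
    f y ≤ f x + ⟪gradient f x, y - x⟫ + L / 2 * ‖y - x‖ ^ 2 := by
  set v := y - x
  let F : ℝ → ℝ := fun t =>
    f (x + t • v) - t * ⟪gradient f x, v⟫ - L / 2 * t ^ 2 * ‖v‖ ^ 2
  have hF : ∀ t, HasDerivAt F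
      (⟪gradient f (x + t • v) - gradient f x, v⟫ - L * t * ‖v‖ ^ 2) t := by
    intro t
    have hlin := (hf (x + t • v)).hasGradientAt.hasDerivAt_comp_add_smul.sub
      ((hasDerivAt_id t).mul_const ⟪gradient f x, v⟫)
    have hquad := ((hasDerivAt_pow 2 t).const_mul ((L : ℝ) / 2)).mul_const (‖v‖ ^ 2)
    exact (hlin.sub hquad).congr_deriv (by rw [inner_sub_left]; ring)
  have hanti : AntitoneOn F (Set.Ici 0) := by
    refine antitoneOn_of_hasDerivWithinAt_nonpos (convex_Ici 0)
      (fun t _ => (hF t).continuousAt.continuousWithinAt) (fun t _ => (hF t).hasDerivWithinAt)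
      fun t ht => ?_
    rw [interior_Ici] at ht
    linarith [hlip.inner_gradient_add_smul_sub_le x v ht.le]
  have h01 : F 1 ≤ F 0 := hanti Set.self_mem_Ici (zero_le_one' ℝ) zero_le_one
  simp only [F, one_smul, zero_smul, add_zero, v, add_sub_cancel] at h01
  linarith

theorem norm_sub_sub_smul_sq_div (x y d : E) {lam : ℝ} (hlam : lam ≠ 0) :
    ‖y - (x - lam • d)‖ ^ 2 / (2 * lam) =
      ‖y - x‖ ^ 2 / (2 * lam) + ⟪d, y - x⟫ + lam / 2 * ‖d‖ ^ 2 := by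
  rw [show y - (x - lam • d) = (y - x) + lam • d by abel, norm_add_sq_real, real_inner_smul_right,
    norm_smul, mul_pow, Real.norm_eq_abs, sq_abs, real_inner_comm]
  field_simp

theorem prox_objective_quadratic_growth [CompleteSpace E] {f : E → ℝ} {g : E → EReal}
    {L : NNReal} {xb : E} {lam : ℝ}
    (hf : Differentiable ℝ f) (hlip : LipschitzWith L (gradient f))
    (hmin : ∀ y, (f xb : EReal) + g xb ≤ f y + g y) (hlam : 0 < lam) (y : E) :
    g xb + ((‖xb - (xb - lam • gradient f xb)‖ ^ 2 / (2 * lam) : ℝ) : EReal)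
        + (((1 / (2 * lam) - L / 2) * ‖y - xb‖ ^ 2 : ℝ) : EReal)
      ≤ g y + ((‖y - (xb - lam • gradient f xb)‖ ^ 2 / (2 * lam) : ℝ) : EReal) := by
  set d := gradient f xb
  set c := 1 / (2 * lam) - L / 2
  have hq : ‖xb - (xb - lam • d)‖ ^ 2 / (2 * lam) = lam / 2 * ‖d‖ ^ 2 := by
    rw [sub_sub_cancel, norm_smul, mul_pow, Real.norm_eq_abs, sq_abs]
    field_simp
  have hreal : f y - f xb + c * ‖y - xb‖ ^ 2 + lam / 2 * ‖d‖ ^ 2 ≤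
      ‖y - (xb - lam • d)‖ ^ 2 / (2 * lam) := by
    have hc : c * ‖y - xb‖ ^ 2 = ‖y - xb‖ ^ 2 / (2 * lam) - L / 2 * ‖y - xb‖ ^ 2 := by ring
    rw [norm_sub_sub_smul_sq_div xb y d hlam.ne']
    linarith [descent_lemma hf hlip xb y]
  calc g xb + ((‖xb - (xb - lam • d)‖ ^ 2 / (2 * lam) : ℝ) : EReal)
          + ((c * ‖y - xb‖ ^ 2 : ℝ) : EReal)
      = ((f xb : EReal) + g xb) + ((-f xb + c * ‖y - xb‖ ^ 2 + lam / 2 * ‖d‖ ^ 2 : ℝ) : EReal) := by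
        rw [hq, add_assoc, ← EReal.coe_add, add_comm (f xb : EReal), add_assoc, ← EReal.coe_add]
        congr 2; ring
    _ ≤ ((f y : EReal) + g y) + ((-f xb + c * ‖y - xb‖ ^ 2 + lam / 2 * ‖d‖ ^ 2 : ℝ) : EReal) :=
        add_le_add_left (hmin y) _
    _ = g y + ((f y - f xb + c * ‖y - xb‖ ^ 2 + lam / 2 * ‖d‖ ^ 2 : ℝ) : EReal) := by
        rw [add_comm (f y : EReal), add_assoc, ← EReal.coe_add]
        ring_nf
    _ ≤ g y + ((‖y - (xb - lam • d)‖ ^ 2 / (2 * lam) : ℝ) : EReal) :=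
        add_le_add_right (EReal.coe_le_coe_iff.2 hreal) _

end InnerProductSpace

theorem Paper.Proper.ne_top_of_forall_phiSum_le {n : ℕ} {f : En n → ℝ} {g : En n → EReal}
    {xb : En n} (hg : Proper g) (hmin : ∀ y, phiSum f g xb ≤ phiSum f g y) : g xb ≠ ⊤ := by
  obtain ⟨z, hz⟩ := hg.1
  intro htop
  have := hmin z
  rw [phiSum, phiSum, htop, EReal.coe_add_top, top_le_iff] at this
  exact EReal.add_ne_top (EReal.coe_ne_top _) hz this

theorem statement5_general {n : ℕ} (f : En n → ℝ) (g : En n → EReal) (Lf : ℝ)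
    (lamg : EReal) (xb : En n)
    (hdiff : Differentiable ℝ f)
    (hlip : LipschitzWith (Real.toNNReal Lf) (gradient f))
    (hproper : Proper g)
    (hmin : ∀ y : En n, phiSum f g xb ≤ phiSum f g y) :
    ∀ lam : ℝ, 0 < lam → lam < 1 / Lf → (lam : EReal) < lamg →
      proxSet g lam (xb - lam • gradient f xb) = {xb} ∧ lamCritical f g lam xb := by
  intro lam hlam hlamLf _
  have hLf : 0 < Lf := one_div_pos.1 (hlam.trans hlamLf)
  have hc : 0 < 1 / (2 * lam) - (Real.toNNReal Lf : ℝ) / 2 := by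
    have : lam * Lf < 1 := (lt_div_iff₀ hLf).1 hlamLf
    rw [Real.coe_toNNReal _ hLf.le,
      show 1 / (2 * lam) - Lf / 2 = (1 - lam * Lf) / (2 * lam) by field_simp]
    exact div_pos (by linarith) (by positivity)
  have hprox : proxSet g lam (xb - lam • gradient f xb) = {xb} :=
    setOf_forall_le_eq_singleton_of_quadratic_growth _ hc
      (EReal.add_ne_bot_iff.2 ⟨hproper.2 xb, EReal.coe_ne_bot _⟩)
      (EReal.add_ne_top (hproper.ne_top_of_forall_phiSum_le hmin) (EReal.coe_ne_top _))
      (prox_objective_quadratic_growth hdiff hlip hmin hlam)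
  exact ⟨hprox, by rw [lamCritical, hprox]; exact Set.mem_singleton xb⟩

/-- necessary condition for optimality in the structured problem:
the global minimizer is a fixed point of the prox-gradient map. -/
theorem statement5 {n : ℕ} (f : En n → ℝ) (g : En n → EReal) (Lf : ℝ)
    (lamg : EReal) (xb : En n)
    (hLf : 0 < Lf) (hdiff : Differentiable ℝ f)
    (hlip : LipschitzWith (Real.toNNReal Lf) (gradient f))
    (hproper : Proper g) (hlsc : LowerSemicontinuous g)
    (hpb : ProxBounded g) (hth : lamg = proxThreshold g)
    (hmin : ∀ y : En n, phiSum f g xb ≤ phiSum f g y) :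
    ∀ lam : ℝ, 0 < lam → lam < 1 / Lf → (lam : EReal) < lamg →
      proxSet g lam (xb - lam • gradient f xb) = {xb} ∧ lamCritical f g lam xb :=
  statement5_general f g Lf lamg xb hdiff hlip hproper hmin
end
end

section
/- Consider the structured problem of minimizing φ = f + g, where f : ℝⁿ → ℝ is C²-smooth with ∇f Lipschitz continuous on ℝⁿ with modulus L_f > 0, and g : ℝⁿ → ℝ ∪ {+∞} is proper, lower semicontinuous, and prox-bounded with threshold λ_g. Let λ ∈ (0, min{1/L_f, λ_g}) and σ ∈ (0, λ(1 − λL_f)/(2(1 + λL_f)²)). For x ∈ ℝⁿ take x̂ ∈ Prox_{λg}(x − λ∇f(x)) and set v̂ := ∇f(x̂) − ∇f(x) + (1/λ)(x − x̂). If x̂ ≠ x, then v̂ ≠ 0 and the forward-backward envelope satisfies φ_λ(x̂) < φ_λ(x) − σ‖v̂‖². Consequently, for every d ∈ ℝⁿ there exists τ̄ > 0 such that φ_λ(x̂ + τd) ≤ φ_λ(x) − σ‖v̂‖² for all τ ∈ (0, τ̄). -/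
open Filter Topology

noncomputable section

/-! Completing the square shows that `x̂` also minimizes the model defining `φ_λ(x)`, so
`φ_λ(x) = f(x) + ⟨∇f(x), x̂ - x⟩ + ‖x̂ - x‖²/(2λ) + g(x̂)`, while `φ_λ(x̂) ≤ f(x̂) + g(x̂)`.
The descent lemma bounds `f(x̂)` by the linearization at `x` plus `L_f‖x̂ - x‖²/2`, so the envelope
drops by at least `(1 - λL_f)‖x̂ - x‖²/(2λ)`. Since `∇f` is `L_f`-Lipschitz,
`(1/λ - L_f)‖x̂ - x‖ ≤ ‖v̂‖ ≤ (1/λ + L_f)‖x̂ - x‖`: the lower bound gives `v̂ ≠ 0`, and the upper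
one together with the bound on `σ` turns the decrease into `σ‖v̂‖²`. The envelope is an infimum of
functions continuous in `x`, hence upper semicontinuous, so the strict decrease persists at
`x̂ + τd` for small `τ > 0`. -/

open Paper

section InnerProductSpace

variable {E : Type*} [NormedAddCommGroup E] [InnerProductSpace ℝ E]

theorem inner_add_norm_sq_div_eq (a x z : E) {lam : ℝ} (hlam : lam ≠ 0) :
    ⟪a, z - x⟫ + ‖z - x‖ ^ 2 / (2 * lam) =
      ‖z - (x - lam • a)‖ ^ 2 / (2 * lam) - lam / 2 * ‖a‖ ^ 2 := by
  rw [show z - (x - lam • a) = (z - x) + lam • a by abel, norm_add_sq_real,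
    real_inner_smul_right, real_inner_comm, norm_smul, Real.norm_eq_abs, mul_pow, sq_abs]
  field_simp
  ring

theorem le_add_inner_gradient_add_sq_of_lipschitzWith [CompleteSpace E] {f : E → ℝ}
    {K : NNReal} (hf : Differentiable ℝ f) (hL : LipschitzWith K (gradient f)) (x y : E) :
    f y ≤ f x + ⟪gradient f x, y - x⟫ + K / 2 * ‖y - x‖ ^ 2 := by
  set d := y - x
  set F : ℝ → ℝ := fun t => f (x + t • d) - t * ⟪gradient f x, d⟫ - t ^ 2 * (K / 2 * ‖d‖ ^ 2)
  have hF : ∀ t : ℝ, HasDerivAt F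
      (⟪gradient f (x + t • d) - gradient f x, d⟫ - t * (K * ‖d‖ ^ 2)) t := by
    intro t
    have hline : HasDerivAt (fun t : ℝ => x + t • d) d t := by
      simpa using ((hasDerivAt_id t).smul_const d).const_add x
    have hfline := ((hf _).hasFDerivAt.comp_hasDerivAt t hline)
    rw [← inner_gradient_left] at hfline
    refine ((hfline.sub (hasDerivAt_mul_const _)).sub
      ((hasDerivAt_pow 2 t).mul_const _)).congr_deriv ?_
    rw [inner_sub_left]; push_cast; ring
  have hF' : ∀ t ∈ interior (Set.Ici (0 : ℝ)),
      ⟪gradient f (x + t • d) - gradient f x, d⟫ - t * (K * ‖d‖ ^ 2) ≤ 0 := by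
    intro t ht
    rw [interior_Ici] at ht
    have hlip : ‖gradient f (x + t • d) - gradient f x‖ ≤ K * (t * ‖d‖) := by
      simpa [dist_eq_norm, norm_smul, abs_of_pos (Set.mem_Ioi.1 ht)] using
        hL.dist_le_mul (x + t • d) x
    refine sub_nonpos.2 ?_
    calc ⟪gradient f (x + t • d) - gradient f x, d⟫
        ≤ ‖gradient f (x + t • d) - gradient f x‖ * ‖d‖ := real_inner_le_norm _ _
      _ ≤ K * (t * ‖d‖) * ‖d‖ := by gcongr
      _ = t * (K * ‖d‖ ^ 2) := by ring
  have hanti : AntitoneOn F (Set.Ici 0) :=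
    antitoneOn_of_hasDerivWithinAt_nonpos (convex_Ici 0)
      (fun t _ => (hF t).continuousAt.continuousWithinAt)
      (fun t _ => (hF t).hasDerivWithinAt) hF'
  have h01 := hanti Set.self_mem_Ici (Set.mem_Ici.2 zero_le_one) zero_le_one
  simp only [F, d, zero_smul, add_zero, one_smul, one_pow, zero_mul, sub_zero, one_mul,
    add_sub_cancel, ne_eq, OfNat.ofNat_ne_zero, not_false_eq_true, zero_pow] at h01
  linarith

theorem LipschitzWith.norm_sub_add_smul_sub_le {F : E → E} {K : NNReal} (hF : LipschitzWith K F)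
    {c : ℝ} (hc : 0 ≤ c) (x y : E) :
    ‖F y - F x + c • (x - y)‖ ≤ (K + c) * ‖y - x‖ := by
  calc ‖F y - F x + c • (x - y)‖ ≤ ‖F y - F x‖ + ‖c • (x - y)‖ := norm_add_le _ _
    _ ≤ K * ‖y - x‖ + c * ‖y - x‖ := by
        gcongr
        · exact hF.norm_sub_le y x
        · rw [norm_smul, Real.norm_of_nonneg hc, norm_sub_rev]
    _ = (K + c) * ‖y - x‖ := by ring

theorem LipschitzWith.sub_mul_norm_sub_le_norm_sub_add_smul_sub {F : E → E} {K : NNReal}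
    (hF : LipschitzWith K F) {c : ℝ} (hc : 0 ≤ c) (x y : E) :
    (c - K) * ‖y - x‖ ≤ ‖F y - F x + c • (x - y)‖ := by
  have hsplit : c • (x - y) = (F y - F x + c • (x - y)) - (F y - F x) := by abel
  have hc' : ‖c • (x - y)‖ = c * ‖y - x‖ := by
    rw [norm_smul, Real.norm_of_nonneg hc, norm_sub_rev]
  have htri := _root_.norm_sub_le (F y - F x + c • (x - y)) (F y - F x)
  rw [← hsplit, hc'] at htri
  linarith [hF.norm_sub_le y x]

end InnerProductSpace

theorem mul_sq_lt_descent_gap {lam L σ s a : ℝ} (hlam : 0 < lam) (hL : 0 ≤ L)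
    (hlamL : lam * L < 1) (hσ : σ < lam * (1 - lam * L) / (2 * (1 + lam * L) ^ 2))
    (hs : 0 < s) (ha : 0 ≤ a) (has : a ≤ (L + 1 / lam) * s) :
    σ * a ^ 2 < s ^ 2 / (2 * lam) - L / 2 * s ^ 2 := by
  have hgap : s ^ 2 / (2 * lam) - L / 2 * s ^ 2 = (1 - lam * L) / (2 * lam) * s ^ 2 := by
    field_simp
  rw [hgap]
  rcases le_or_gt σ 0 with hσ0 | hσ0
  · calc σ * a ^ 2 ≤ 0 := mul_nonpos_of_nonpos_of_nonneg hσ0 (sq_nonneg a)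
      _ < (1 - lam * L) / (2 * lam) * s ^ 2 := by
          have : 0 < 1 - lam * L := by linarith
          positivity
  · have has' : a ≤ (1 + lam * L) / lam * s := by
      convert has using 2; field_simp; ring
    calc σ * a ^ 2 ≤ σ * ((1 + lam * L) / lam * s) ^ 2 := by gcongr
      _ = σ * (2 * (1 + lam * L) ^ 2) * (s ^ 2 / (2 * lam ^ 2)) := by field_simp
      _ < lam * (1 - lam * L) * (s ^ 2 / (2 * lam ^ 2)) :=
          mul_lt_mul_of_pos_right ((lt_div_iff₀ (by positivity)).1 hσ) (by positivity)
      _ = (1 - lam * L) / (2 * lam) * s ^ 2 := by field_simp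

theorem EReal.continuous_coe_add_const {α : Type*} [TopologicalSpace α] {r : α → ℝ}
    (hr : Continuous r) (c : EReal) : Continuous fun a => (r a : EReal) + c :=
  continuous_iff_continuousAt.2 fun _ =>
    (EReal.continuousAt_add (Or.inl (EReal.coe_ne_top _)) (Or.inl (EReal.coe_ne_bot _))).comp
      ((EReal.continuous_coe_iff.2 hr).prodMk continuous_const).continuousAt

theorem UpperSemicontinuousAt.exists_pos_forall_lt_add_smul {E β : Type*}
    [NormedAddCommGroup E] [NormedSpace ℝ E] [LinearOrder β] {φ : E → β} {x : E} {c : β}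
    (hφ : UpperSemicontinuousAt φ x) (hx : φ x < c) (d : E) :
    ∃ τb : ℝ, 0 < τb ∧ ∀ τ : ℝ, 0 < τ → τ < τb → φ (x + τ • d) < c := by
  have hray : Tendsto (fun τ : ℝ => x + τ • d) (𝓝 0) (𝓝 x) :=
    (show Continuous fun τ : ℝ => x + τ • d by fun_prop).tendsto' 0 x (by simp)
  obtain ⟨ε, hε, hball⟩ := Metric.eventually_nhds_iff.1 (hray.eventually (hφ c hx))
  exact ⟨ε, hε, fun τ hτ hτε => hball (by rwa [Real.dist_0_eq_abs, abs_of_pos hτ])⟩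

namespace Paper

variable {n : ℕ} {f : En n → ℝ} {g : En n → EReal} {lam : ℝ}

theorem ne_top_of_mem_proxSet (hg : ∃ z, g z ≠ ⊤) {u y : En n} (hy : y ∈ proxSet g lam u) :
    g y ≠ ⊤ := by
  obtain ⟨z, hz⟩ := hg
  intro hy_top
  have := hy z
  rw [hy_top, EReal.top_add_coe, top_le_iff] at this
  exact (EReal.add_lt_top hz (EReal.coe_ne_top _)).ne this

theorem FBE_eq_of_mem_proxSet (hlam : lam ≠ 0) {x xh : En n}
    (hxh : xh ∈ proxSet g lam (x - lam • gradient f x)) :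
    FBE f g lam x =
      ((f x + ⟪gradient f x, xh - x⟫ + ‖xh - x‖ ^ 2 / (2 * lam) : ℝ) : EReal) + g xh := by
  have hsq : ∀ y, ((f x + ⟪gradient f x, y - x⟫ + ‖y - x‖ ^ 2 / (2 * lam) : ℝ) : EReal) + g y =
      ((f x - lam / 2 * ‖gradient f x‖ ^ 2 : ℝ) : EReal) +
        (g y + ((‖y - (x - lam • gradient f x)‖ ^ 2 / (2 * lam) : ℝ) : EReal)) := by
    intro y
    have hreal : f x + ⟪gradient f x, y - x⟫ + ‖y - x‖ ^ 2 / (2 * lam) =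
        (f x - lam / 2 * ‖gradient f x‖ ^ 2) +
          ‖y - (x - lam • gradient f x)‖ ^ 2 / (2 * lam) := by
      rw [add_assoc, inner_add_norm_sq_div_eq _ _ _ hlam]; ring
    rw [hreal, EReal.coe_add, add_assoc, add_comm _ (g y)]
  refine le_antisymm (iInf_le _ xh) (le_iInf fun y => ?_)
  rw [hsq, hsq]
  exact add_le_add le_rfl (hxh y)

theorem FBE_le_phiSum (x : En n) : FBE f g lam x ≤ phiSum f g x :=
  (iInf_le _ x).trans_eq (by simp [phiSum])

theorem FBE_lt_sub_of_mem_proxSet (hg : Proper g) (hlam : lam ≠ 0) {x xh : En n}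
    (hxh : xh ∈ proxSet g lam (x - lam • gradient f x)) {δ : ℝ}
    (hδ : f xh < f x + ⟪gradient f x, xh - x⟫ + ‖xh - x‖ ^ 2 / (2 * lam) - δ) :
    FBE f g lam xh < FBE f g lam x - δ := by
  have hG := EReal.coe_toReal (ne_top_of_mem_proxSet hg.1 hxh) (hg.2 xh)
  calc FBE f g lam xh ≤ phiSum f g xh := FBE_le_phiSum xh
    _ = ((f xh + (g xh).toReal : ℝ) : EReal) := by rw [phiSum, EReal.coe_add, hG]
    _ < ((f x + ⟪gradient f x, xh - x⟫ + ‖xh - x‖ ^ 2 / (2 * lam) + (g xh).toReal - δ : ℝ) :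
          EReal) := by exact_mod_cast (by linarith)
    _ = FBE f g lam x - δ := by
        rw [FBE_eq_of_mem_proxSet hlam hxh, EReal.coe_sub, EReal.coe_add, hG]

theorem upperSemicontinuous_FBE (hf : Continuous f) (hgrad : Continuous (gradient f)) :
    UpperSemicontinuous (FBE f g lam) :=
  upperSemicontinuous_iInf fun y =>
    (EReal.continuous_coe_add_const (by fun_prop) (g y)).upperSemicontinuous

end Paper

theorem statement14_general {n : ℕ} (f : En n → ℝ) (g : En n → EReal)
    (Lf : ℝ) (lamg : EReal) (lam σ : ℝ)
    (hf : ContDiff ℝ 2 f) (hLf : 0 < Lf)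
    (hlip : LipschitzWith (Real.toNNReal Lf) (gradient f))
    (hproper : Proper g)
    (hlam : 0 < lam ∧ lam < 1 / Lf ∧ (lam : EReal) < lamg)
    (hσ : 0 < σ ∧ σ < lam * (1 - lam * Lf) / (2 * (1 + lam * Lf) ^ 2)) :
    ∀ x : En n, ∀ xh ∈ proxSet g lam (x - lam • gradient f x), xh ≠ x →
      gradient f xh - gradient f x + (1 / lam) • (x - xh) ≠ 0 ∧
      FBE f g lam xh <
        FBE f g lam x -
          ((σ * ‖gradient f xh - gradient f x + (1 / lam) • (x - xh)‖ ^ 2 : ℝ) : EReal) ∧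
      ∀ d : En n, ∃ τb : ℝ, 0 < τb ∧ ∀ τ : ℝ, 0 < τ → τ < τb →
        FBE f g lam (xh + τ • d) ≤
          FBE f g lam x -
            ((σ * ‖gradient f xh - gradient f x + (1 / lam) • (x - xh)‖ ^ 2 : ℝ) : EReal) := by
  obtain ⟨hlam, hlamLf, -⟩ := hlam
  intro x xh hxh hne
  set v := gradient f xh - gradient f x + (1 / lam) • (x - xh)
  have hK : (Real.toNNReal Lf : ℝ) = Lf := Real.coe_toNNReal _ hLf.le
  have hlamL : lam * Lf < 1 := (lt_div_iff₀ hLf).1 hlamLf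
  have hs : 0 < ‖xh - x‖ := norm_pos_iff.2 (sub_ne_zero.2 hne)
  have hinv : 0 ≤ 1 / lam := by positivity
  have hupper : ‖v‖ ≤ (Lf + 1 / lam) * ‖xh - x‖ := by
    simpa only [hK] using LipschitzWith.norm_sub_add_smul_sub_le hlip hinv x xh
  have hlower : (1 / lam - Lf) * ‖xh - x‖ ≤ ‖v‖ := by
    simpa only [hK] using LipschitzWith.sub_mul_norm_sub_le_norm_sub_add_smul_sub hlip hinv x xh
  have hdesc : f xh ≤ f x + ⟪gradient f x, xh - x⟫ + Lf / 2 * ‖xh - x‖ ^ 2 := by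
    simpa only [hK] using
      le_add_inner_gradient_add_sq_of_lipschitzWith (hf.differentiable two_ne_zero) hlip x xh
  have hv : v ≠ 0 := by
    have hcoeff : 0 < 1 / lam - Lf := by rw [sub_pos, lt_div_iff₀ hlam]; linarith
    exact norm_pos_iff.1 ((mul_pos hcoeff hs).trans_le hlower)
  have hdecrease : FBE f g lam xh < FBE f g lam x - ((σ * ‖v‖ ^ 2 : ℝ) : EReal) :=
    FBE_lt_sub_of_mem_proxSet hproper hlam.ne' hxh <| by
      linarith [mul_sq_lt_descent_gap hlam hLf.le hlamL hσ.2 hs (norm_nonneg v) hupper]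
  refine ⟨hv, hdecrease, fun d => ?_⟩
  obtain ⟨τb, hτb, hray⟩ := UpperSemicontinuousAt.exists_pos_forall_lt_add_smul
    (upperSemicontinuous_FBE (g := g) (lam := lam) hf.continuous hlip.continuous xh) hdecrease d
  exact ⟨τb, hτb, fun τ hτ hτb' => (hray τ hτ hτb').le⟩

/-- descent property of the forward-backward envelope (stepsize
well-posedness of the generalized line-search proximal gradient method). -/
theorem statement14 {n : ℕ} (f : En n → ℝ) (g : En n → EReal)
    (Lf : ℝ) (lamg : EReal) (lam σ : ℝ)
    (hf : ContDiff ℝ 2 f) (hLf : 0 < Lf)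
    (hlip : LipschitzWith (Real.toNNReal Lf) (gradient f))
    (hproper : Proper g) (hlsc : LowerSemicontinuous g)
    (hpb : ProxBounded g) (hth : lamg = proxThreshold g)
    (hlam : 0 < lam ∧ lam < 1 / Lf ∧ (lam : EReal) < lamg)
    (hσ : 0 < σ ∧ σ < lam * (1 - lam * Lf) / (2 * (1 + lam * Lf) ^ 2)) :
    ∀ x : En n, ∀ xh ∈ proxSet g lam (x - lam • gradient f x), xh ≠ x →
      gradient f xh - gradient f x + (1 / lam) • (x - xh) ≠ 0 ∧
      FBE f g lam xh <
        FBE f g lam x -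
          ((σ * ‖gradient f xh - gradient f x + (1 / lam) • (x - xh)‖ ^ 2 : ℝ) : EReal) ∧
      ∀ d : En n, ∃ τb : ℝ, 0 < τb ∧ ∀ τ : ℝ, 0 < τ → τ < τb →
        FBE f g lam (xh + τ • d) ≤
          FBE f g lam x -
            ((σ * ‖gradient f xh - gradient f x + (1 / lam) • (x - xh)‖ ^ 2 : ℝ) : EReal) :=
  statement14_general f g Lf lamg lam σ hf hLf hlip hproper hlam hσ
end
end

section
/- Let μ₀ > 0 and let g : ℝⁿ → ℝ be g(x) = μ₀‖x‖₀, where ‖x‖₀ is the number of nonzero components of x. Then for every x ∈ ℝⁿ the limiting subdifferential of g is ∂g(x) = {v ∈ ℝⁿ : vᵢ = 0 whenever xᵢ ≠ 0} (with vᵢ ∈ ℝ arbitrary when xᵢ = 0). Moreover, for each (x,y) ∈ gph ∂g and each v = (v₁,…,vₙ) ∈ ℝⁿ, the second-order subdifferential is ∂²g(x,y)(v) = {w ∈ ℝⁿ : (wᵢ, −vᵢ) ∈ F(xᵢ, yᵢ) for i = 1,…,n}, where F : ℝ² ⇒ ℝ² is given by F(t,p) = {0} × ℝ if t ≠ 0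 and p = 0; F(t,p) = ({0} × ℝ) ∪ (ℝ × {0}) if t = 0 and p = 0; F(t,p) = ℝ × {0} if t = 0 and p ≠ 0; and F(t,p) = ∅ otherwise. -/
/-!
The ℓ₀-function is locally nondecreasing (supports can only grow near a point) and locally
constant along coordinates in the support. Hence its regular subgradients at `z` are exactly the
vectors vanishing on the support of `z`; the graph of this map is the closed complementarity set
`{(x, v) | xᵢ vᵢ = 0}`, so the limiting subdifferential is the same map.

The second-order subdifferential is then the limiting normal cone to the complementarity set
`C`. At `z ∈ C`, a regular normal `q` is orthogonal to the coordinate axes through `z` that lie in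
`C`, i.e. `q.1 i = 0` when `z.2 i = 0` and `q.2 i = 0` when `z.1 i = 0`; conversely such a `q` is
orthogonal to `w - z` for every `w ∈ C` near `z`. Passing to limits gives the closed relations
`q.1 i * x i = q.2 i * y i = q.1 i * q.2 i = 0`, and every `q` satisfying them is a regular normal
at points obtained from `(x, y)` by moving off along a suitable axis at the indices where
`x i = y i = 0`. These relations are exactly membership in `F`.
-/

open Filter Topology

noncomputable section

open Paper

/-- The mapping `F : ℝ² ⇒ ℝ²` appearing in the second-order subdifferential of the
ℓ₀-norm. -/
def Fmap (t p : ℝ) : Set (ℝ × ℝ) :=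
  if t ≠ 0 ∧ p = 0 then {q : ℝ × ℝ | q.1 = 0}
  else if t = 0 ∧ p = 0 then {q : ℝ × ℝ | q.1 = 0} ∪ {q : ℝ × ℝ | q.2 = 0}
  else if t = 0 ∧ p ≠ 0 then {q : ℝ × ℝ | q.2 = 0}
  else ∅

namespace Paper

variable {n : ℕ}

theorem eq_zero_of_forall_eventually_mul_le {L C : ℝ}
    (h : ∀ ε > 0, ∀ᶠ t in 𝓝 (0 : ℝ), t * L ≤ ε * (|t| * C)) : L = 0 := by
  have hbound : ∀ ε > 0, |L| ≤ ε * C := by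
    intro ε hε
    obtain ⟨t₁, ht₁, ht₁pos⟩ := ((h ε hε).filter_mono nhdsWithin_le_nhds |>.and
      (self_mem_nhdsWithin (s := Set.Ioi 0))).exists
    obtain ⟨t₂, ht₂, ht₂neg⟩ := ((h ε hε).filter_mono nhdsWithin_le_nhds |>.and
      (self_mem_nhdsWithin (s := Set.Iio 0))).exists
    rw [abs_of_pos ht₁pos] at ht₁
    rw [abs_of_neg ht₂neg] at ht₂
    refine abs_le.2 ⟨?_, ?_⟩
    · nlinarith
    · nlinarith
  have hlim : Tendsto (fun ε : ℝ => ε * C) (𝓝[>] 0) (𝓝 0) := by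
    simpa using (tendsto_id.mul_const C).mono_left (nhdsWithin_le_nhds (a := (0:ℝ)))
  exact abs_nonpos_iff.1 (ge_of_tendsto hlim (eventually_nhdsWithin_of_forall hbound))

theorem eventually_norm_smul_lt {E : Type*} [NormedAddCommGroup E] [NormedSpace ℝ E]
    (d : E) {δ : ℝ} (hδ : 0 < δ) : ∀ᶠ t in 𝓝 (0 : ℝ), ‖t • d‖ < δ := by
  have : Tendsto (fun t : ℝ => t • d) (𝓝 0) (𝓝 0) := by
    simpa using (tendsto_id (x := 𝓝 (0:ℝ))).smul_const d
  simpa using this.eventually (Metric.ball_mem_nhds (0 : E) hδ)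

theorem mem_regSubdiff_coe_iff {f : En n → ℝ} {x v : En n} :
    v ∈ RegSubdiff (fun y => (f y : EReal)) x ↔ ∀ ε > 0, ∃ δ > 0, ∀ y : En n,
      ‖y - x‖ < δ → f x + (⟪v, y - x⟫ - ε * ‖y - x‖) ≤ f y := by
  simp only [RegSubdiff, Set.mem_ofPred_eq, ← EReal.coe_add, EReal.coe_le_coe_iff]
  exact and_iff_right (EReal.coe_ne_top _)

theorem mem_regSubdiff_coe_of_eventually {f : En n → ℝ} {x v : En n}
    (h : ∀ᶠ y in 𝓝 x, f x + ⟪v, y - x⟫ ≤ f y) :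
    v ∈ RegSubdiff (fun y => (f y : EReal)) x := by
  obtain ⟨δ, hδ, hball⟩ := Metric.eventually_nhds_iff.1 h
  refine mem_regSubdiff_coe_iff.2 fun ε hε => ⟨δ, hδ, fun y hy => ?_⟩
  have := hball (by rwa [dist_eq_norm])
  nlinarith [norm_nonneg (y - x)]

theorem inner_eq_zero_of_mem_regSubdiff_coe {f : En n → ℝ} {x v : En n}
    (hv : v ∈ RegSubdiff (fun y => (f y : EReal)) x) (d : En n)
    (hd : ∀ᶠ t in 𝓝 (0 : ℝ), f (x + t • d) = f x) : ⟪v, d⟫ = 0 := by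
  refine eq_zero_of_forall_eventually_mul_le (C := ‖d‖) fun ε hε => ?_
  obtain ⟨δ, hδ, hreg⟩ := mem_regSubdiff_coe_iff.1 hv ε hε
  filter_upwards [hd, eventually_norm_smul_lt d hδ] with t hft hsmall
  have := hreg (x + t • d) (by rwa [add_sub_cancel_left])
  rw [add_sub_cancel_left, hft, real_inner_smul_right, norm_smul, Real.norm_eq_abs] at this
  linarith

theorem regSubdiff_subset_limSubdiff (φ : En n → EReal) (x : En n) :
    RegSubdiff φ x ⊆ LimSubdiff φ x := fun v hv =>
  ⟨fun _ => x, fun _ => v, tendsto_const_nhds, tendsto_const_nhds, tendsto_const_nhds,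
    fun _ => hv⟩

theorem mem_of_mem_limSubdiff_of_isClosed {φ : En n → EReal} {S : Set (En n × En n)}
    (hS : IsClosed S) (hreg : ∀ x, ∀ v ∈ RegSubdiff φ x, (x, v) ∈ S) {x v : En n}
    (hv : v ∈ LimSubdiff φ x) : (x, v) ∈ S := by
  obtain ⟨xs, vs, hxs, -, hvs, hmem⟩ := hv
  exact hS.mem_of_tendsto (hxs.prodMk_nhds hvs)
    (Eventually.of_forall fun k => hreg _ _ (hmem k))

theorem mem_regNormalConeP_of_eventually {Ω : Set (En n × En n)} {z q : En n × En n}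
    (h : ∀ᶠ w in 𝓝 z, w ∈ Ω → ⟪q.1, w.1 - z.1⟫ + ⟪q.2, w.2 - z.2⟫ ≤ 0) :
    q ∈ RegNormalConeP Ω z := by
  obtain ⟨δ, hδ, hball⟩ := Metric.eventually_nhds_iff.1 h
  refine fun ε hε => ⟨δ, hδ, fun w hw hwz => ?_⟩
  have := hball (by rwa [dist_eq_norm]) hw
  nlinarith [norm_nonneg (w - z)]

theorem inner_add_inner_eq_zero_of_mem_regNormalConeP {Ω : Set (En n × En n)}
    {z q : En n × En n} (hq : q ∈ RegNormalConeP Ω z) (d : En n × En n)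
    (hd : ∀ᶠ t in 𝓝 (0 : ℝ), z + t • d ∈ Ω) : ⟪q.1, d.1⟫ + ⟪q.2, d.2⟫ = 0 := by
  refine eq_zero_of_forall_eventually_mul_le (C := ‖d‖) fun ε hε => ?_
  obtain ⟨δ, hδ, hreg⟩ := hq ε hε
  filter_upwards [hd, eventually_norm_smul_lt d hδ] with t hmem hsmall
  have := hreg (z + t • d) hmem (by rwa [add_sub_cancel_left])
  simp only [Prod.fst_add, Prod.snd_add, add_sub_cancel_left, Prod.smul_fst, Prod.smul_snd,
    real_inner_smul_right, norm_smul, Real.norm_eq_abs] at this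
  linarith

theorem mem_of_mem_limNormalConeP_of_isClosed {Ω : Set (En n × En n)}
    {S : Set ((En n × En n) × (En n × En n))} (hS : IsClosed S)
    (hreg : ∀ z ∈ Ω, ∀ q ∈ RegNormalConeP Ω z, (z, q) ∈ S) {z q : En n × En n}
    (hq : q ∈ LimNormalConeP Ω z) : (z, q) ∈ S := by
  obtain ⟨zs, qs, hmem, hzs, hqs, hnormal⟩ := hq
  exact hS.mem_of_tendsto (hzs.prodMk_nhds hqs)
    (Eventually.of_forall fun k => hreg _ (hmem k) _ (hnormal k))

theorem mem_limNormalConeP_of_mem_closure {Ω : Set (En n × En n)} {z q : En n × En n}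
    (h : z ∈ closure {z' | z' ∈ Ω ∧ q ∈ RegNormalConeP Ω z'}) :
    q ∈ LimNormalConeP Ω z := by
  obtain ⟨zs, hzs, hlim⟩ := mem_closure_iff_seq_limit.1 h
  exact ⟨zs, fun _ => q, fun k => (hzs k).1, hlim, tendsto_const_nhds, fun k => (hzs k).2⟩

theorem real_inner_eq_sum (a b : En n) : ⟪a, b⟫ = ∑ i, a i * b i := by
  simp [PiLp.inner_apply, mul_comm]

theorem eventually_forall_ne_zero (z : En n) : ∀ᶠ y in 𝓝 z, ∀ i, z i ≠ 0 → y i ≠ 0 :=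
  eventually_all.2 fun i => by
    by_cases hi : z i = 0
    · exact Eventually.of_forall fun _ h => absurd hi h
    · exact ((PiLp.continuous_apply 2 _ i).continuousAt.eventually_ne hi).mono fun _ hy _ => hy

theorem ell0_le_ell0 {x y : En n} (h : ∀ i, x i ≠ 0 → y i ≠ 0) : ell0 x ≤ ell0 y :=
  Finset.card_le_card fun i => by simpa using h i

theorem ell0_lt_ell0 {x y : En n} (h : ∀ i, x i ≠ 0 → y i ≠ 0) {j : Fin n} (hxj : x j = 0)
    (hyj : y j ≠ 0) : ell0 x < ell0 y :=
  Finset.card_lt_card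
    ⟨fun i => by simpa using h i, fun hsub => hyj (by simpa [hxj] using @hsub j)⟩

theorem apply_eq_zero_of_mem_regSubdiff_ell0 {μ₀ : ℝ} {z v : En n}
    (hv : v ∈ RegSubdiff (fun y => ((μ₀ * ell0 y : ℝ) : EReal)) z) {i : Fin n}
    (hzi : z i ≠ 0) : v i = 0 := by
  set e : En n := EuclideanSpace.single i 1
  have hline : Tendsto (fun t : ℝ => z + t • e) (𝓝 0) (𝓝 z) :=
    Continuous.tendsto' (by fun_prop) 0 z (by simp)
  have hconst : ∀ᶠ t in 𝓝 (0 : ℝ), μ₀ * ell0 (z + t • e) = μ₀ * ell0 z := by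
    filter_upwards [hline.eventually (eventually_forall_ne_zero z)] with t ht
    refine congrArg _ (congrArg _ (le_antisymm (ell0_le_ell0 fun j hj => ?_) (ell0_le_ell0 ht)))
    by_cases hji : j = i
    · exact hji ▸ hzi
    · simpa [e, PiLp.single_apply, hji] using hj
  simpa [e, EuclideanSpace.inner_single_right] using
    inner_eq_zero_of_mem_regSubdiff_coe hv _ hconst

theorem mem_regSubdiff_ell0 {μ₀ : ℝ} (hμ₀ : 0 < μ₀) {z v : En n}
    (hv : ∀ i, z i ≠ 0 → v i = 0) :
    v ∈ RegSubdiff (fun y => ((μ₀ * ell0 y : ℝ) : EReal)) z := by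
  have hsmall : ∀ᶠ y in 𝓝 z, ⟪v, y - z⟫ < μ₀ :=
    (Continuous.tendsto' (by fun_prop) z 0 (by simp)).eventually (gt_mem_nhds hμ₀)
  refine mem_regSubdiff_coe_of_eventually ?_
  -- a new nonzero coordinate costs `μ₀`, more than the linear term near `z`; without one,
  -- `y - z` is supported where `v` vanishes
  filter_upwards [eventually_forall_ne_zero z, hsmall] with y hsupp hinner
  by_cases hnew : ∃ j, z j = 0 ∧ y j ≠ 0
  · obtain ⟨j, hzj, hyj⟩ := hnew
    have : (ell0 z : ℝ) + 1 ≤ ell0 y := by exact_mod_cast ell0_lt_ell0 hsupp hzj hyj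
    nlinarith
  · push Not at hnew
    have hzero : ⟪v, y - z⟫ = 0 := by
      rw [real_inner_eq_sum]
      refine Finset.sum_eq_zero fun i _ => ?_
      by_cases hzi : z i = 0
      · simp [hzi, hnew i hzi]
      · simp [hv i hzi]
    have : (ell0 z : ℝ) ≤ ell0 y := by exact_mod_cast ell0_le_ell0 hsupp
    rw [hzero]
    nlinarith

def complementaritySet (n : ℕ) : Set (En n × En n) := {p | ∀ i, p.1 i * p.2 i = 0}

theorem mem_complementaritySet_iff {p : En n × En n} :
    p ∈ complementaritySet n ↔ ∀ i, p.1 i ≠ 0 → p.2 i = 0 := by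
  simp only [complementaritySet, Set.mem_ofPred_eq, mul_eq_zero, or_iff_not_imp_left]

theorem isClosed_complementaritySet (n : ℕ) : IsClosed (complementaritySet n) := by
  simp only [complementaritySet, Set.ofPred_forall]
  exact isClosed_iInter fun i => isClosed_eq (by fun_prop) continuous_const

theorem limSubdiff_ell0 {μ₀ : ℝ} (hμ₀ : 0 < μ₀) (x : En n) :
    LimSubdiff (fun y => ((μ₀ * ell0 y : ℝ) : EReal)) x = {v | ∀ i, x i ≠ 0 → v i = 0} := by
  ext v
  refine ⟨fun hv => (mem_complementaritySet_iff (p := (x, v))).1 ?_,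
    fun hv => regSubdiff_subset_limSubdiff _ _ (mem_regSubdiff_ell0 hμ₀ hv)⟩
  exact mem_of_mem_limSubdiff_of_isClosed (isClosed_complementaritySet n)
    (fun z w hw => mem_complementaritySet_iff.2 fun i => apply_eq_zero_of_mem_regSubdiff_ell0 hw)
    hv

theorem gphSubdiff_ell0 {μ₀ : ℝ} (hμ₀ : 0 < μ₀) :
    gphSubdiff (fun y : En n => ((μ₀ * ell0 y : ℝ) : EReal)) = complementaritySet n := by
  ext p
  rw [mem_complementaritySet_iff, gphSubdiff, Set.mem_ofPred_eq, limSubdiff_ell0 hμ₀]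
  rfl

theorem mem_regNormalConeP_complementaritySet_iff {z q : En n × En n}
    (hz : z ∈ complementaritySet n) :
    q ∈ RegNormalConeP (complementaritySet n) z ↔
      ∀ i, (z.2 i = 0 → q.1 i = 0) ∧ (z.1 i = 0 → q.2 i = 0) := by
  constructor
  · intro hq i
    constructor
    · intro hz2
      have hline : ∀ t : ℝ,
          z + t • (EuclideanSpace.single i (1 : ℝ), 0) ∈ complementaritySet n := by
        intro t j
        by_cases hji : j = i
        · simp [hji, hz2]
        · simpa [PiLp.single_apply, hji] using hz j
      simpa [EuclideanSpace.inner_single_right] using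
        inner_add_inner_eq_zero_of_mem_regNormalConeP hq _ (Eventually.of_forall hline)
    · intro hz1
      have hline : ∀ t : ℝ,
          z + t • (0, EuclideanSpace.single i (1 : ℝ)) ∈ complementaritySet n := by
        intro t j
        by_cases hji : j = i
        · simp [hji, hz1]
        · simpa [PiLp.single_apply, hji] using hz j
      simpa [EuclideanSpace.inner_single_right] using
        inner_add_inner_eq_zero_of_mem_regNormalConeP hq _ (Eventually.of_forall hline)
  · intro hq
    refine mem_regNormalConeP_of_eventually ?_
    -- near `z` the supports of both components can only grow, so every coordinate term vanishes
    filter_upwards [(continuous_fst.tendsto z).eventually (eventually_forall_ne_zero z.1),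
      (continuous_snd.tendsto z).eventually (eventually_forall_ne_zero z.2)] with w hw1 hw2 hw
    rw [real_inner_eq_sum, real_inner_eq_sum, ← Finset.sum_add_distrib]
    refine (Finset.sum_eq_zero fun i _ => ?_).le
    have hzi := hz i
    have hwi := hw i
    have hqi := hq i
    by_cases h1 : z.1 i = 0 <;> by_cases h2 : z.2 i = 0 <;> simp_all

theorem limNormalConeP_complementaritySet {z : En n × En n} (hz : z ∈ complementaritySet n) :
    LimNormalConeP (complementaritySet n) z =
      {q | ∀ i, q.1 i * z.1 i = 0 ∧ q.2 i * z.2 i = 0 ∧ q.1 i * q.2 i = 0} := by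
  ext q
  constructor
  · intro hq
    let S : Set ((En n × En n) × (En n × En n)) :=
      {p | ∀ i, p.2.1 i * p.1.1 i = 0 ∧ p.2.2 i * p.1.2 i = 0 ∧ p.2.1 i * p.2.2 i = 0}
    have hS : IsClosed S := by
      simp only [S, Set.ofPred_forall, Set.ofPred_and]
      exact isClosed_iInter fun i => (isClosed_eq (by fun_prop) continuous_const).inter
        ((isClosed_eq (by fun_prop) continuous_const).inter
          (isClosed_eq (by fun_prop) continuous_const))
    refine mem_of_mem_limNormalConeP_of_isClosed hS (fun w hw p hp i => ?_) hq
    have hwi := hw i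
    have hpi := (mem_regNormalConeP_complementaritySet_iff hw).1 hp i
    by_cases h1 : w.1 i = 0 <;> by_cases h2 : w.2 i = 0 <;> simp_all
  · intro hq
    -- at an index with `z.1 i = z.2 i = 0`, move off along the axis whose normal component
    -- is free: the first one if `q.1 i = 0`, otherwise the second (then `q.2 i = 0`)
    let d : En n × En n :=
      (WithLp.toLp 2 fun i => if z.1 i = 0 ∧ z.2 i = 0 ∧ q.1 i = 0 then 1 else 0,
       WithLp.toLp 2 fun i => if z.1 i = 0 ∧ z.2 i = 0 ∧ q.1 i ≠ 0 then 1 else 0)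
    have hgood : ∀ t : ℝ, 0 < t → z + t • d ∈
        {z' | z' ∈ complementaritySet n ∧ q ∈ RegNormalConeP (complementaritySet n) z'} := by
      intro t ht
      have hcoord : ∀ i, (z + t • d).1 i * (z + t • d).2 i = 0 ∧
          ((z + t • d).2 i = 0 → q.1 i = 0) ∧ ((z + t • d).1 i = 0 → q.2 i = 0) := by
        intro i
        have hzi := hz i
        have hqi := hq i
        by_cases h1 : z.1 i = 0 <;> by_cases h2 : z.2 i = 0 <;> by_cases h3 : q.1 i = 0 <;>
          simp_all [d, ht.ne']
      have hmem : z + t • d ∈ complementaritySet n := fun i => (hcoord i).1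
      exact ⟨hmem, (mem_regNormalConeP_complementaritySet_iff hmem).2 fun i => (hcoord i).2⟩
    refine mem_limNormalConeP_of_mem_closure (mem_closure_of_tendsto (b := 𝓝[>] (0 : ℝ))
      (f := fun t => z + t • d) ?_ (eventually_nhdsWithin_of_forall fun t ht => hgood t ht))
    exact (Continuous.tendsto' (by fun_prop) 0 z (by simp)).mono_left nhdsWithin_le_nhds

end Paper

theorem mem_Fmap_iff {t p a b : ℝ} (htp : t * p = 0) :
    (a, b) ∈ Fmap t p ↔ a * t = 0 ∧ b * p = 0 ∧ a * b = 0 := by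
  unfold Fmap
  by_cases ht : t = 0 <;> by_cases hp : p = 0 <;> simp_all [or_comm]

/-- first- and second-order subdifferentials of `x ↦ μ₀‖x‖₀`. -/
theorem statement18 {n : ℕ} (μ₀ : ℝ) (hμ₀ : 0 < μ₀) :
    (∀ x : En n,
      LimSubdiff (fun y : En n => ((μ₀ * ell0 y : ℝ) : EReal)) x =
        {v : En n | ∀ i : Fin n, x i ≠ 0 → v i = 0}) ∧
    (∀ x y : En n,
      y ∈ LimSubdiff (fun y' : En n => ((μ₀ * ell0 y' : ℝ) : EReal)) x →
      ∀ v : En n,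
        SecondSubdiff (fun y' : En n => ((μ₀ * ell0 y' : ℝ) : EReal)) x y v =
          {w : En n | ∀ i : Fin n, ((w i, -(v i)) : ℝ × ℝ) ∈ Fmap (x i) (y i)}) := by
  refine ⟨limSubdiff_ell0 hμ₀, fun x y hy v => ?_⟩
  have hxy : (x, y) ∈ complementaritySet n := by
    rwa [← gphSubdiff_ell0 hμ₀]
  ext w
  simp only [SecondSubdiff, Set.mem_ofPred_eq, gphSubdiff_ell0 hμ₀,
    limNormalConeP_complementaritySet hxy, mem_Fmap_iff (hxy _)]
  rfl
end
end
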